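/- arXiv:1510.02302 — 4 statements merged into one kernel-verified Lean document; each statement's English description precedes it below -/
import Mathlib

section
/- Let Ω = C([0,∞), ℝ^d) with the shift maps θ_τ, f : ℝ^d → ℝ continuous with 0 < f(x) ≤ M for all x, Φ : Ω → Ω the time-change map, μ a probability measure on Ω with θ_τ measure-preserving for μ for every τ ≥ 0 and q₀ := ∫ 1/f(ω(0)) dμ(ω) < ∞, and let P' be the pushforward under Φ of the measure with density q₀⁻¹/f(ω(0)) with respect to μ. If μ is ergodic for the shift flow, i.e., every Borel set A ⊆ Ω with θ_τ⁻¹(A) = A for all τ ≥ 0 satisfies μ(A) ∈ {0,1}, then P' is also ergodic for the shift flow: every Borel set A with θ_τ⁻¹(A) = A for all τ ≥ 0 satisfies P'(A) ∈ {0,1}. -/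
/-!
The time change `Φ` intertwines the shift `θ_τ` with the shift by the elapsed clock time
`ψ_ω(τ)`, so `Φ⁻¹(A)` is exactly shift invariant whenever `A` is. The density `q₀⁻¹/f(ω(0))` is
strictly positive, so the reweighted measure is equivalent to `μ`, and `Φ⁻¹(A)` is null
measurable for both. It remains to see that ergodicity for measurable invariant sets extends to
null measurable sets that are invariant up to null sets: if `B` is measurable and
`θ_τ⁻¹(B) = B` a.e. for every `τ`, then by Fubini, for almost every path `ω`, `θ_τ ω ∈ B ↔ ω ∈ B`
for almost every `τ`; hence the set of paths whose orbit lies in `B` at almost all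
large times is measurable, exactly invariant, and a.e. equal to `B`.
-/

open MeasureTheory Set Filter Topology
open scoped NNReal

noncomputable section

/-- The path space `Ω = C([0,∞), ℝ^d)` with the compact-open topology (which coincides
with the topology of uniform convergence on compact sets since `[0,∞)` is locally
compact). -/
abbrev PathSpace (d : ℕ) := C(ℝ≥0, EuclideanSpace ℝ (Fin d))

/-- Borel σ-algebra on the path space. -/
instance (d : ℕ) : MeasurableSpace (PathSpace d) := borel _

instance (d : ℕ) : BorelSpace (PathSpace d) := ⟨rfl⟩

/-- The shift map `(θ_τ ω)(t) = ω(t + τ)`. -/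
def pathShift (d : ℕ) (τ : ℝ≥0) (ω : PathSpace d) : PathSpace d :=
  ω.comp ⟨fun t => t + τ, by exact continuous_id.add continuous_const⟩

/-- `ψ_ω(t) = ∫₀ᵗ 1/f(ω(s)) ds`. -/
def psi (d : ℕ) (f : EuclideanSpace ℝ (Fin d) → ℝ) (ω : PathSpace d) (t : ℝ) : ℝ :=
  ∫ s in (0:ℝ)..t, 1 / f (ω s.toNNReal)

section TimeChange

variable {d : ℕ} {f : EuclideanSpace ℝ (Fin d) → ℝ}

theorem pathShift_pathShift (a b : ℝ≥0) (ω : PathSpace d) :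
    pathShift d a (pathShift d b ω) = pathShift d (a + b) ω := by
  ext t
  simp only [pathShift, ContinuousMap.comp_apply, ContinuousMap.coe_mk, add_assoc]

theorem continuous_uncurry_pathShift : Continuous (Function.uncurry (pathShift d)) := by
  have h : Continuous fun τ : ℝ≥0 =>
      (⟨fun t => t + τ, continuous_id.add continuous_const⟩ : C(ℝ≥0, ℝ≥0)) :=
    ContinuousMap.continuous_of_continuous_uncurry _ (continuous_snd.add continuous_fst)
  exact ContinuousMap.continuous_comp'.comp ((h.comp continuous_fst).prodMk continuous_snd)

theorem intervalIntegrable_one_div_comp (hf : Continuous f) (hf_pos : ∀ x, 0 < f x)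
    (ω : PathSpace d) (a b : ℝ) :
    IntervalIntegrable (fun s : ℝ => 1 / f (ω s.toNNReal)) volume a b :=
  (continuous_const.div ((hf.comp ω.continuous).comp continuous_real_toNNReal)
    fun _ => (hf_pos _).ne').intervalIntegrable a b

theorem psi_strictMono (hf : Continuous f) (hf_pos : ∀ x, 0 < f x) (ω : PathSpace d) :
    StrictMono (psi d f ω) := by
  intro a b hab
  rw [← sub_pos, psi, psi, intervalIntegral.integral_interval_sub_left
    (intervalIntegrable_one_div_comp hf hf_pos ω _ _)
    (intervalIntegrable_one_div_comp hf hf_pos ω _ _)]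
  exact intervalIntegral.intervalIntegral_pos_of_pos
    (intervalIntegrable_one_div_comp hf hf_pos ω _ _) (fun _ => one_div_pos.2 (hf_pos _)) hab

theorem psi_nonneg (hf : Continuous f) (hf_pos : ∀ x, 0 < f x) (ω : PathSpace d) {t : ℝ}
    (ht : 0 ≤ t) : 0 ≤ psi d f ω t := by
  simpa [psi] using (psi_strictMono hf hf_pos ω).monotone ht

theorem psi_pathShift (hf : Continuous f) (hf_pos : ∀ x, 0 < f x) (τ : ℝ≥0) (ω : PathSpace d)
    {t : ℝ} (ht : 0 ≤ t) : psi d f (pathShift d τ ω) t = psi d f ω (t + τ) - psi d f ω τ := by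
  have hshift : psi d f (pathShift d τ ω) t = ∫ s in (0:ℝ)..t, 1 / f (ω (s + τ).toNNReal) := by
    refine intervalIntegral.integral_congr fun s hs => ?_
    rw [uIcc_of_le ht] at hs
    simp only [pathShift, ContinuousMap.comp_apply, ContinuousMap.coe_mk,
      Real.toNNReal_add hs.1 τ.coe_nonneg, Real.toNNReal_coe]
  rw [hshift, intervalIntegral.integral_comp_add_right (fun s => 1 / f (ω s.toNNReal)), zero_add,
    psi, psi, intervalIntegral.integral_interval_sub_left
    (intervalIntegrable_one_div_comp hf hf_pos ω _ _)
    (intervalIntegrable_one_div_comp hf hf_pos ω _ _)]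

theorem timeChange_pathShift (hf : Continuous f) (hf_pos : ∀ x, 0 < f x)
    {φ : PathSpace d → ℝ≥0 → ℝ≥0} (hφ : ∀ ω (t : ℝ≥0), psi d f ω (φ ω t) = (t : ℝ))
    {Φ : PathSpace d → PathSpace d} (hΦ : ∀ ω (t : ℝ≥0), Φ ω t = ω (φ ω t))
    (τ : ℝ≥0) (ω : PathSpace d) :
    Φ (pathShift d τ ω) = pathShift d (psi d f ω τ).toNNReal (Φ ω) := by
  ext1 t
  have hclock : φ ω (t + (psi d f ω τ).toNNReal) = φ (pathShift d τ ω) t + τ := by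
    refine NNReal.coe_injective ((psi_strictMono hf hf_pos ω).injective ?_)
    have h := psi_pathShift hf hf_pos τ ω (φ (pathShift d τ ω) t).coe_nonneg
    rw [hφ] at h
    rw [hφ, NNReal.coe_add, NNReal.coe_add,
      Real.coe_toNNReal _ (psi_nonneg hf hf_pos ω τ.coe_nonneg)]
    linarith
  simp only [hΦ, pathShift, ContinuousMap.comp_apply, ContinuousMap.coe_mk, hclock]

theorem pathShift_preimage_timeChange_preimage (hf : Continuous f) (hf_pos : ∀ x, 0 < f x)
    {φ : PathSpace d → ℝ≥0 → ℝ≥0} (hφ : ∀ ω (t : ℝ≥0), psi d f ω (φ ω t) = (t : ℝ))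
    {Φ : PathSpace d → PathSpace d} (hΦ : ∀ ω (t : ℝ≥0), Φ ω t = ω (φ ω t))
    {A : Set (PathSpace d)} (hA : ∀ τ, pathShift d τ ⁻¹' A = A) (τ : ℝ≥0) :
    pathShift d τ ⁻¹' (Φ ⁻¹' A) = Φ ⁻¹' A := by
  ext ω
  show Φ (pathShift d τ ω) ∈ A ↔ Φ ω ∈ A
  rw [timeChange_pathShift hf hf_pos hφ hΦ, ← mem_preimage, hA]

end TimeChange

theorem ae_comp_add_right_iff (c : ℝ) {p : ℝ → Prop} : (∀ᵐ τ, p (τ + c)) ↔ ∀ᵐ τ, p τ := by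
  rw [← (measurableEmbedding_addRight c).ae_map_iff, map_add_right_eq_self]

theorem measurableSet_setOf_ae_mem {α β : Type*} [MeasurableSpace α] [MeasurableSpace β]
    {ν : Measure α} [SFinite ν] {K : Set (α × β)} (hK : MeasurableSet K) :
    MeasurableSet {y | ∀ᵐ x ∂ν, (x, y) ∈ K} :=
  measurable_measure_prodMk_right hK.compl (measurableSet_singleton 0)

section Flow

variable {X : Type*} {T : ℝ≥0 → X → X} {B : Set X}

-- Unlike `B`, this set is exactly invariant: shifting the orbit only moves the time threshold.
def aeEventuallyIn (T : ℝ≥0 → X → X) (B : Set X) : Set X :=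
  {x | ∃ n : ℕ, ∀ᵐ τ : ℝ, (n : ℝ) ≤ τ → T τ.toNNReal x ∈ B}

theorem measurableSet_aeEventuallyIn [MeasurableSpace X] (hT : Measurable (Function.uncurry T))
    (hB : MeasurableSet B) : MeasurableSet (aeEventuallyIn T B) := by
  have hmem : MeasurableSet {p : ℝ × X | T p.1.toNNReal p.2 ∈ B} :=
    hT.comp (measurable_real_toNNReal.comp measurable_fst |>.prodMk measurable_snd) hB
  simp only [aeEventuallyIn, ofPred_exists]
  refine MeasurableSet.iUnion fun n : ℕ => measurableSet_setOf_ae_mem (ν := volume)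
    (K := {p : ℝ × X | (n : ℝ) ≤ p.1 → T p.1.toNNReal p.2 ∈ B}) ?_
  exact measurableSet_setOfPred.2 <| (measurableSet_setOfPred.1
    (measurableSet_le measurable_const measurable_fst)).imp (measurableSet_setOfPred.1 hmem)

theorem preimage_aeEventuallyIn (hT : ∀ a b x, T a (T b x) = T (a + b) x) (σ : ℝ≥0) :
    T σ ⁻¹' aeEventuallyIn T B = aeEventuallyIn T B := by
  ext x
  have hdelay : ∀ n : ℕ, (∀ᵐ τ : ℝ, (n : ℝ) ≤ τ → T τ.toNNReal (T σ x) ∈ B) ↔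
      ∀ᵐ τ : ℝ, (n : ℝ) + σ ≤ τ → T τ.toNNReal x ∈ B := fun n => by
    refine Iff.trans ?_ (ae_comp_add_right_iff (σ : ℝ)
      (p := fun τ => (n : ℝ) + σ ≤ τ → T τ.toNNReal x ∈ B))
    refine eventually_congr (Eventually.of_forall fun τ => ?_)
    simp only [add_le_add_iff_right]
    refine imp_congr_right fun hτ => ?_
    rw [hT, Real.toNNReal_add ((Nat.cast_nonneg n).trans hτ) σ.coe_nonneg, Real.toNNReal_coe]
  simp only [mem_preimage, aeEventuallyIn, mem_ofPred_eq, hdelay]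
  constructor
  · rintro ⟨n, hn⟩
    refine ⟨n + ⌈(σ : ℝ)⌉₊, hn.mono fun τ h hτ => h ?_⟩
    push_cast at hτ
    linarith [Nat.le_ceil (σ : ℝ)]
  · rintro ⟨n, hn⟩
    exact ⟨n, hn.mono fun τ h hτ => h (by linarith [σ.coe_nonneg])⟩

theorem aeEventuallyIn_ae_eq [MeasurableSpace X] {μ : Measure X} [SFinite μ]
    (hT : Measurable (Function.uncurry T)) (hB : MeasurableSet B)
    (hBinv : ∀ τ, T τ ⁻¹' B =ᵐ[μ] B) : aeEventuallyIn T B =ᵐ[μ] B := by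
  have hmem : MeasurableSet {p : X × ℝ | T p.2.toNNReal p.1 ∈ B} :=
    hT.comp (measurable_real_toNNReal.comp measurable_snd |>.prodMk measurable_fst) hB
  have hK : MeasurableSet {p : X × ℝ | T p.2.toNNReal p.1 ∈ B ↔ p.1 ∈ B} :=
    measurableSet_setOfPred.2 <| (measurableSet_setOfPred.1 hmem).iff
      (measurableSet_setOfPred.1 (measurable_fst hB))
  have hfubini : ∀ᵐ x ∂μ, ∀ᵐ τ : ℝ, (T τ.toNNReal x ∈ B ↔ x ∈ B) :=
    (Measure.ae_ae_comm hK).2 (ae_of_all _ fun τ => eventuallyEq_set.1 (hBinv τ.toNNReal))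
  refine eventuallyEq_set.2 (hfubini.mono fun x hx =>
    ⟨?_, fun hxB => ⟨0, hx.mono fun τ h _ => h.2 hxB⟩⟩)
  rintro ⟨n, hn⟩
  by_contra hxB
  have hnull : volume (Ici (n : ℝ)) = 0 :=
    measure_eq_zero_iff_ae_notMem.2 ((hn.and hx).mono fun τ h hτ => hxB (h.2.1 (h.1 hτ)))
  simp [Real.volume_Ici] at hnull

theorem aeconst_of_forall_preimage_ae_eq [MeasurableSpace X] {μ : Measure X}
    [IsProbabilityMeasure μ] (hT : ∀ a b x, T a (T b x) = T (a + b) x)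
    (hTm : Measurable (Function.uncurry T)) (hqmp : ∀ τ, Measure.QuasiMeasurePreserving (T τ) μ μ)
    (h_erg : ∀ A : Set X, MeasurableSet A → (∀ τ, T τ ⁻¹' A = A) → μ A = 0 ∨ μ A = 1)
    {S : Set X} (hS : NullMeasurableSet S μ) (hSinv : ∀ τ, T τ ⁻¹' S =ᵐ[μ] S) :
    EventuallyConst S (ae μ) := by
  obtain ⟨B, -, hB, hBS⟩ := hS.exists_measurable_subset_ae_eq
  have hBinv : ∀ τ, T τ ⁻¹' B =ᵐ[μ] B := fun τ =>
    ((hqmp τ).preimage_ae_eq hBS).trans ((hSinv τ).trans hBS.symm)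
  have hC := measurableSet_aeEventuallyIn hTm hB
  refine .congr ?_ ((aeEventuallyIn_ae_eq hTm hB hBinv).trans hBS)
  rw [eventuallyConst_set', ae_eq_empty, ae_eq_univ, prob_compl_eq_zero_iff hC]
  exact h_erg _ hC (preimage_aeEventuallyIn hT)

end Flow

section Density

variable {X : Type*} [MeasurableSpace X] {μ : Measure X} {g : X → ℝ}

theorem integral_pos_of_forall_pos [NeZero μ] (hg : Integrable g μ) (hg_pos : ∀ x, 0 < g x) :
    0 < ∫ x, g x ∂μ := by
  have hsupp : Function.support g = univ := eq_univ_of_forall fun x => (hg_pos x).ne'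
  rw [integral_pos_iff_support_of_nonneg (fun x => (hg_pos x).le) hg, hsupp]
  exact Measure.measure_univ_pos.2 (NeZero.ne μ)

theorem isProbabilityMeasure_withDensity_inv_integral_mul [NeZero μ] (hg : Integrable g μ)
    (hg_pos : ∀ x, 0 < g x) :
    IsProbabilityMeasure (μ.withDensity fun x => ENNReal.ofReal ((∫ y, g y ∂μ)⁻¹ * g x)) := by
  have hint := integral_pos_of_forall_pos hg hg_pos
  constructor
  rw [withDensity_apply _ MeasurableSet.univ, Measure.restrict_univ,
    ← ofReal_integral_eq_lintegral_ofReal (hg.const_mul _)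
      (ae_of_all _ fun x => (mul_pos (inv_pos.2 hint) (hg_pos x)).le),
    integral_const_mul, inv_mul_cancel₀ hint.ne', ENNReal.ofReal_one]

theorem absolutelyContinuous_withDensity_inv_integral_mul [NeZero μ] (hg : Integrable g μ)
    (hg_pos : ∀ x, 0 < g x) :
    μ ≪ μ.withDensity fun x => ENNReal.ofReal ((∫ y, g y ∂μ)⁻¹ * g x) :=
  withDensity_absolutelyContinuous' (hg.aemeasurable.const_mul _).ennreal_ofReal
    (ae_of_all _ fun x => (ENNReal.ofReal_pos.2
      (mul_pos (inv_pos.2 (integral_pos_of_forall_pos hg hg_pos)) (hg_pos x))).ne')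

end Density

theorem stmt3_general (d : ℕ) (f : EuclideanSpace ℝ (Fin d) → ℝ) (hf : Continuous f)
    (hf_pos : ∀ x, 0 < f x)
    (φ : PathSpace d → ℝ≥0 → ℝ≥0)
    (hφ : ∀ ω (t : ℝ≥0), psi d f ω (φ ω t) = (t : ℝ))
    (Φ : PathSpace d → PathSpace d)
    (hΦ : ∀ ω (t : ℝ≥0), Φ ω t = ω (φ ω t))
    (μ : Measure (PathSpace d)) [IsProbabilityMeasure μ]
    (hshift : ∀ τ : ℝ≥0, MeasurePreserving (pathShift d τ) μ μ)
    (h_int : Integrable (fun ω : PathSpace d => 1 / f (ω (0 : ℝ≥0))) μ)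
    (q₀ : ℝ) (hq₀ : q₀ = ∫ ω, 1 / f (ω (0 : ℝ≥0)) ∂μ)
    (P' : Measure (PathSpace d))
    (hP' : P' = Measure.map Φ
      (μ.withDensity fun ω => ENNReal.ofReal (q₀⁻¹ * (1 / f (ω (0 : ℝ≥0))))))
    (h_erg : ∀ A : Set (PathSpace d), MeasurableSet A →
      (∀ τ : ℝ≥0, pathShift d τ ⁻¹' A = A) → μ A = 0 ∨ μ A = 1) :
    ∀ A : Set (PathSpace d), MeasurableSet A →
      (∀ τ : ℝ≥0, pathShift d τ ⁻¹' A = A) → P' A = 0 ∨ P' A = 1 := by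
  intro A hA hAinv
  subst hq₀ hP'
  have hg_pos : ∀ ω : PathSpace d, 0 < 1 / f (ω 0) := fun ω => one_div_pos.2 (hf_pos _)
  set ν := μ.withDensity fun ω => ENNReal.ofReal ((∫ ω, 1 / f (ω 0) ∂μ)⁻¹ * (1 / f (ω 0)))
  have : IsProbabilityMeasure ν := isProbabilityMeasure_withDensity_inv_integral_mul h_int hg_pos
  by_cases hΦm : AEMeasurable Φ ν
  swap
  · left
    rw [Measure.map_of_not_aemeasurable hΦm, Measure.coe_zero, Pi.zero_apply]
  have hS := hΦm.nullMeasurable hA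
  have hconst := aeconst_of_forall_preimage_ae_eq (fun a b ω => pathShift_pathShift a b ω)
    continuous_uncurry_pathShift.measurable (fun τ => (hshift τ).quasiMeasurePreserving) h_erg
    (hS.mono_ac (absolutelyContinuous_withDensity_inv_integral_mul h_int hg_pos))
    (fun τ => (pathShift_preimage_timeChange_preimage hf hf_pos hφ hΦ hAinv τ).eventuallyEq)
  rw [Measure.map_apply_of_aemeasurable hΦm hA, ← prob_compl_eq_zero_iff₀ hS, ← ae_eq_empty,
    ← ae_eq_univ, ← eventuallyConst_set']
  exact hconst.anti (withDensity_absolutelyContinuous _ _).ae_le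

/-- In the setting of the dependent time change on path space, if `μ` is
ergodic for the shift flow (every Borel set invariant under all shifts has measure 0
or 1), then the stationary measure `P'` of the time-changed process (the pushforward
under `Φ` of the measure with density `q₀⁻¹/f(ω(0))` w.r.t. `μ`) is also ergodic for the
shift flow. -/
theorem stmt3 (d : ℕ) (f : EuclideanSpace ℝ (Fin d) → ℝ) (hf : Continuous f)
    (M : ℝ) (hM : 0 < M) (hf_pos : ∀ x, 0 < f x) (hf_le : ∀ x, f x ≤ M)
    (φ : PathSpace d → ℝ≥0 → ℝ≥0)
    (hφ : ∀ ω (t : ℝ≥0), psi d f ω (φ ω t) = (t : ℝ))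
    (Φ : PathSpace d → PathSpace d)
    (hΦ : ∀ ω (t : ℝ≥0), Φ ω t = ω (φ ω t))
    (μ : Measure (PathSpace d)) [IsProbabilityMeasure μ]
    (hshift : ∀ τ : ℝ≥0, MeasurePreserving (pathShift d τ) μ μ)
    (h_int : Integrable (fun ω : PathSpace d => 1 / f (ω (0 : ℝ≥0))) μ)
    (q₀ : ℝ) (hq₀ : q₀ = ∫ ω, 1 / f (ω (0 : ℝ≥0)) ∂μ)
    (P' : Measure (PathSpace d))
    (hP' : P' = Measure.map Φ
      (μ.withDensity fun ω => ENNReal.ofReal (q₀⁻¹ * (1 / f (ω (0 : ℝ≥0))))))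
    (h_erg : ∀ A : Set (PathSpace d), MeasurableSet A →
      (∀ τ : ℝ≥0, pathShift d τ ⁻¹' A = A) → μ A = 0 ∨ μ A = 1) :
    ∀ A : Set (PathSpace d), MeasurableSet A →
      (∀ τ : ℝ≥0, pathShift d τ ⁻¹' A = A) → P' A = 0 ∨ P' A = 1 :=
  stmt3_general d f hf hf_pos φ hφ Φ hΦ μ hshift h_int q₀ hq₀ P' hP' h_erg
end
end

section
/- Let β₀,β₁,β₂,β₁₁,β₁₂,β₂₂ ∈ ℝ and f(y,ẏ) = exp(β₀ + β₁y + β₂ẏ + (β₁₁/2)y² + β₁₂yẏ + (β₂₂/2)ẏ²). Then (2π)⁻¹ ∬_{ℝ²} u·v · log|v·f(u,v)| · exp(−(u²+v²)/2) du dv = β₁₂. Equivalently, for independent standard normal variables U₁, U₂, E[U₁ U₂ log|U₂ f(U₁,U₂)|] = β₁₂, which is the moment identity q₀·E'[Z_t Ż_t log|Ż_t|] = β₁₂ in the quadratic exponential model. -/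
/-!
For `v ≠ 0` we have `log |v f(u,v)| = log |v| + Q(u,v)` with `Q` the quadratic exponent, so the
integrand is a finite sum of products `φ(u) ψ(v)` of one-dimensional functions, each integrable
against the Gaussian weight `e^{-u²/2} e^{-v²/2}`. By Fubini every such term factorises, and all
of them except `β₁₂ u² v²` contain the vanishing odd moment `∫ x e^{-x²/2} dx = 0`. The surviving
term is `β₁₂ (∫ x² e^{-x²/2} dx)² = 2π β₁₂`.
-/

open MeasureTheory Real

theorem integral_eq_zero_of_odd {f : ℝ → ℝ} (hf : ∀ x, f (-x) = -f x) : ∫ x, f x = 0 := by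
  have h := integral_neg_eq_self f volume
  simp_rw [hf, integral_neg] at h
  linarith

theorem integral_mul_exp_neg_mul_sq_eq_zero (b : ℝ) : ∫ x : ℝ, x * exp (-b * x ^ 2) = 0 :=
  integral_eq_zero_of_odd fun x => by rw [neg_sq, neg_mul]

theorem integral_sq_mul_exp_neg_half_mul_sq :
    ∫ x : ℝ, x ^ 2 * exp (-(1 / 2) * x ^ 2) = √(2 * π) := by
  have h := ProbabilityTheory.variance_fun_id_gaussianReal (μ := 0) (v := 1)
  rw [ProbabilityTheory.variance_eq_integral measurable_id'.aemeasurable,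
    ProbabilityTheory.integral_id_gaussianReal,
    ProbabilityTheory.integral_gaussianReal_eq_integral_smul one_ne_zero] at h
  simp only [ProbabilityTheory.gaussianPDFReal, NNReal.coe_one, mul_one, sub_zero, smul_eq_mul,
    mul_assoc, integral_const_mul] at h
  field_simp at h
  simp_rw [show ∀ x : ℝ, -(1 / 2) * x ^ 2 = -(x ^ 2 / 2) from fun x => by ring]
  exact h

theorem integrable_pow_mul_exp_neg_mul_sq {b : ℝ} (hb : 0 < b) (n : ℕ) :
    Integrable fun x : ℝ => x ^ n * exp (-b * x ^ 2) := by
  simpa only [rpow_natCast] using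
    integrable_rpow_mul_exp_neg_mul_sq hb (neg_one_lt_zero.trans_le n.cast_nonneg)

theorem abs_mul_log_le_sq_add_one (x : ℝ) : |x * log x| ≤ x ^ 2 + 1 := by
  rw [← log_abs, abs_mul, ← sq_abs x]
  obtain hx | hx := le_total |x| 1
  · obtain h0 | h0 := (abs_nonneg x).eq_or_lt
    · simp [← h0]
    · have h := abs_log_mul_self_lt |x| h0 hx
      rw [abs_mul, abs_abs] at h
      nlinarith [abs_nonneg (log |x|)]
  · have hlog : 0 ≤ log |x| := log_nonneg hx
    have hle : log |x| ≤ |x| := (log_le_sub_one_of_pos (by linarith)).trans (by linarith)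
    rw [abs_of_nonneg hlog]
    nlinarith

theorem integrable_mul_log_mul_exp_neg_mul_sq {b : ℝ} (hb : 0 < b) :
    Integrable fun x : ℝ => x * log x * exp (-b * x ^ 2) := by
  refine ((integrable_pow_mul_exp_neg_mul_sq hb 2).add (integrable_exp_neg_mul_sq hb)).mono'
    (by fun_prop) (ae_of_all _ fun x => ?_)
  rw [Pi.add_apply, norm_mul, norm_of_nonneg (exp_pos _).le, ← add_one_mul]
  exact mul_le_mul_of_nonneg_right (abs_mul_log_le_sq_add_one x) (exp_pos _).le

theorem mul_log_abs_mul_exp (x q : ℝ) : x * log |x * exp q| = x * (log x + q) := by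
  rcases eq_or_ne x 0 with rfl | hx
  · simp
  · rw [log_abs, log_mul hx (exp_ne_zero q), log_exp]

/-- In the quadratic exponential model,
`(2π)⁻¹ ∬ u·v·log|v·f(u,v)|·exp(−(u²+v²)/2) du dv = β₁₂`, i.e. for independent standard
normals `U₁, U₂`, `E[U₁U₂ log|U₂ f(U₁,U₂)|] = β₁₂` (the moment identity
`q₀·E'[Z_t Ż_t log|Ż_t|] = β₁₂`). -/
theorem stmt9 (β₀ β₁ β₂ β₁₁ β₁₂ β₂₂ : ℝ)
    (f : ℝ → ℝ → ℝ)
    (hf : ∀ y ydot : ℝ, f y ydot =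
      Real.exp (β₀ + β₁ * y + β₂ * ydot + β₁₁ / 2 * y ^ 2 + β₁₂ * y * ydot + β₂₂ / 2 * ydot ^ 2)) :
    (2 * π)⁻¹ * ∫ p : ℝ × ℝ,
        p.1 * p.2 * Real.log |p.2 * f p.1 p.2| * Real.exp (-(p.1 ^ 2 + p.2 ^ 2) / 2) = β₁₂ := by
  set g : ℝ → ℝ := fun x => exp (-(1 / 2) * x ^ 2)
  have hb : (0 : ℝ) < 1 / 2 := by norm_num
  have hg_pow (n : ℕ) : Integrable fun x => x ^ n * g x := integrable_pow_mul_exp_neg_mul_sq hb n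
  have hg_id : Integrable fun x => x * g x := integrable_mul_exp_neg_mul_sq hb
  have hg_log : Integrable fun x => x * log x * g x := integrable_mul_log_mul_exp_neg_mul_sq hb
  have hg_mean : ∫ x, x * g x = 0 := integral_mul_exp_neg_mul_sq_eq_zero _
  have hg_var : ∫ x, x ^ 2 * g x = √(2 * π) := integral_sq_mul_exp_neg_half_mul_sq
  set ψ : ℝ → ℝ := fun y =>
    y * log y * g y + β₀ * (y * g y) + β₂ * (y ^ 2 * g y) + β₂₂ / 2 * (y ^ 3 * g y)
  set φ : ℝ → ℝ := fun x => β₁ * (x ^ 2 * g x) + β₁₁ / 2 * (x ^ 3 * g x)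
  have hψ : Integrable ψ :=
    ((hg_log.add (hg_id.const_mul β₀)).add ((hg_pow 2).const_mul β₂)).add ((hg_pow 3).const_mul _)
  have hφ : Integrable φ := ((hg_pow 2).const_mul β₁).add ((hg_pow 3).const_mul _)
  have hsplit : ∀ p : ℝ × ℝ,
      p.1 * p.2 * log |p.2 * f p.1 p.2| * exp (-(p.1 ^ 2 + p.2 ^ 2) / 2) =
        p.1 * g p.1 * ψ p.2 + p.1 ^ 2 * g p.1 * (β₁₂ * (p.2 ^ 2 * g p.2)) + φ p.1 * (p.2 * g p.2) := by
    rintro ⟨u, v⟩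
    have hexp : exp (-(u ^ 2 + v ^ 2) / 2) = g u * g v := by
      rw [← exp_add]; ring_nf
    rw [hf, mul_assoc u v, mul_log_abs_mul_exp, hexp]
    ring
  rw [integral_congr_ae (ae_of_all _ hsplit), Measure.volume_eq_prod,
    integral_add ((hg_id.mul_prod hψ).fun_add ((hg_pow 2).mul_prod ((hg_pow 2).const_mul β₁₂)))
      (hφ.mul_prod hg_id),
    integral_add (hg_id.mul_prod hψ) ((hg_pow 2).mul_prod ((hg_pow 2).const_mul β₁₂)),
    integral_prod_mul (fun x => x * g x) ψ,
    integral_prod_mul (fun x => x ^ 2 * g x) (fun y => β₁₂ * (y ^ 2 * g y)),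
    integral_prod_mul φ (fun y => y * g y), integral_const_mul, hg_mean, hg_var]
  have hπ : √(2 * π) * √(2 * π) = 2 * π := mul_self_sqrt (by positivity)
  field_simp
  linear_combination β₁₂ * hπ
end

section
/- Let β₀,β₁,β₂,β₁₁,β₁₂,β₂₂ ∈ ℝ, f(y,ẏ) = exp(β₀ + β₁y + β₂ẏ + (β₁₁/2)y² + β₁₂yẏ + (β₂₂/2)ẏ²), and m₁ := (2π)^{−1/2} ∫_ℝ |u| log|u| exp(−u²/2) du. Then (2π)⁻¹ ∬_{ℝ²} |v| · log|v·f(u,v)| · exp(−(u²+v²)/2) du dv = m₁ + (β₀ + β₁₁/2 + β₂₂)·√(2/π). Equivalently, for independent standard normals U₁, U₂, E[|U₂| log|U₂ f(U₁,U₂)|] = m₁ + (β₀ + β₁₁/2 + β₂₂)√(2/π), which is the moment identity q₀·E'[|Ż_t| log|Ż_t|] = m₁ + (β₀ + β₁₁/2 + β₂₂)√(2/π) in the quadratic exponential model. -/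
/-!
For `v ≠ 0`, `log |v f(u,v)| = log |v| + q(u,v)` with `q` the quadratic exponent of `f`, so the
integrand is `|v| log |v|` plus `|v|` times a polynomial of degree two in `u`, against the product
weight `e^{-u²/2} e^{-v²/2}`. Integrating out `u` kills the odd moment and replaces `u²` by `1`;
what remains are the absolute moments `∫ |v| v^k e^{-v²/2} dv = 2, 0, 4` for `k = 0, 1, 2`, which
are Gamma integrals.
-/

open MeasureTheory Real Set

theorem integral_eq_zero_of_odd_s10 {G E : Type*} [MeasurableSpace G] [AddGroup G] [MeasurableNeg G]
    [NormedAddCommGroup E] [NormedSpace ℝ E] {f : G → E} (hf : Function.Odd f)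
    (μ : Measure G) [μ.IsNegInvariant] : ∫ x, f x ∂μ = 0 := by
  have h := integral_neg_eq_self f μ
  simp_rw [show ∀ x, f (-x) = -f x from hf, integral_neg] at h
  have h2 : (2 : ℝ) • ∫ x, f x ∂μ = 0 := by
    rw [two_smul]; nth_rewrite 1 [← h]; exact neg_add_cancel _
  exact (smul_eq_zero.mp h2).resolve_left two_ne_zero

theorem abs_mul_log_le_one_add_sq (x : ℝ) : |x * log x| ≤ 1 + x ^ 2 := by
  set t := |x| with ht
  have ht0 : 0 ≤ t := abs_nonneg x
  rw [show |x * log x| = |log t * t| by rw [abs_mul, abs_mul, ← ht, abs_of_nonneg ht0, log_abs,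
    mul_comm], ← sq_abs x, ← ht]
  rcases ht0.eq_or_lt with h0 | hpos
  · simp [← h0]
  rcases le_total t 1 with h1 | h1
  · linarith [abs_log_mul_self_lt t hpos h1, sq_nonneg t]
  · rw [abs_of_nonneg (mul_nonneg (log_nonneg h1) ht0)]
    nlinarith [log_le_self ht0]

theorem integrable_pow_mul_exp_neg_sq_div_two (n : ℕ) :
    Integrable fun x : ℝ => x ^ n * exp (-x ^ 2 / 2) := by
  have h := integrable_rpow_mul_exp_neg_mul_sq (b := 1 / 2) (by norm_num) (s := n)
    (by linarith [(n.cast_nonneg : (0 : ℝ) ≤ n)])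
  simp_rw [rpow_natCast] at h
  convert h using 4
  ring

theorem integrable_abs_mul_pow_mul_exp_neg_sq_div_two (n : ℕ) :
    Integrable fun x : ℝ => |x| * x ^ n * exp (-x ^ 2 / 2) :=
  (integrable_pow_mul_exp_neg_sq_div_two (n + 1)).mono (by fun_prop)
    (ae_of_all _ fun x => by simp [pow_succ, mul_comm])

theorem integrable_abs_mul_log_abs_mul_exp_neg_sq_div_two :
    Integrable fun x : ℝ => |x| * log |x| * exp (-x ^ 2 / 2) := by
  refine ((integrable_pow_mul_exp_neg_sq_div_two 0).add
    (integrable_pow_mul_exp_neg_sq_div_two 2)).mono' (by fun_prop) (ae_of_all _ fun x => ?_)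
  have hx := abs_mul_log_le_one_add_sq x
  rw [abs_mul] at hx
  rw [norm_mul, log_abs, Real.norm_eq_abs, Real.norm_eq_abs, abs_mul, abs_abs,
    abs_of_pos (exp_pos _), Pi.add_apply, pow_zero]
  nlinarith [exp_pos (-x ^ 2 / 2)]

theorem integral_abs_pow_mul_exp_neg_sq_div_two (n : ℕ) :
    ∫ x : ℝ, |x| ^ n * exp (-x ^ 2 / 2) = 2 ^ (((n : ℝ) + 1) / 2) * Gamma ((n + 1) / 2) := by
  have h := integral_rpow_mul_exp_neg_mul_rpow (p := 2) (q := n) (b := 1 / 2) two_pos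
    (by linarith [(n.cast_nonneg : (0 : ℝ) ≤ n)]) (by norm_num)
  have hcomp := integral_comp_abs (f := fun x => x ^ n * exp (-x ^ 2 / 2))
  simp only [sq_abs] at hcomp
  simp_rw [rpow_natCast, rpow_two] at h
  simp only [show ∀ x : ℝ, -(1 / 2) * x ^ 2 = -x ^ 2 / 2 from fun x => by ring] at h
  rw [hcomp, h, one_div, inv_rpow zero_le_two, neg_div, rpow_neg zero_le_two, inv_inv]
  ring

theorem integral_exp_neg_sq_div_two : ∫ x : ℝ, exp (-x ^ 2 / 2) = √(2 * π) := by
  have h := integral_abs_pow_mul_exp_neg_sq_div_two 0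
  simp only [pow_zero, one_mul, Nat.cast_zero, zero_add] at h
  rw [h, Gamma_one_half_eq, ← sqrt_eq_rpow, sqrt_mul zero_le_two]

theorem integral_sq_mul_exp_neg_sq_div_two :
    ∫ x : ℝ, x ^ 2 * exp (-x ^ 2 / 2) = √(2 * π) := by
  have hΓ : Gamma (3 / 2) = √π / 2 := by
    rw [show (3 / 2 : ℝ) = 1 / 2 + 1 by norm_num, Gamma_add_one (by norm_num), Gamma_one_half_eq]
    ring
  have h2 : (2 : ℝ) ^ (3 / 2 : ℝ) = 2 * √2 := by
    rw [show (3 / 2 : ℝ) = 1 + 1 / 2 by norm_num, rpow_add two_pos, rpow_one, sqrt_eq_rpow]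
  have h := integral_abs_pow_mul_exp_neg_sq_div_two 2
  simp only [sq_abs] at h
  rw [h, sqrt_mul zero_le_two]
  norm_num [h2, hΓ]
  ring

theorem integral_abs_mul_exp_neg_sq_div_two : ∫ x : ℝ, |x| * exp (-x ^ 2 / 2) = 2 := by
  simpa using integral_abs_pow_mul_exp_neg_sq_div_two 1

theorem integral_abs_mul_sq_mul_exp_neg_sq_div_two :
    ∫ x : ℝ, |x| * x ^ 2 * exp (-x ^ 2 / 2) = 4 := by
  calc ∫ x : ℝ, |x| * x ^ 2 * exp (-x ^ 2 / 2) = ∫ x : ℝ, |x| ^ 3 * exp (-x ^ 2 / 2) := by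
        congr 1; funext x; rw [pow_succ |x| 2, sq_abs]; ring
    _ = 4 := by
      rw [integral_abs_pow_mul_exp_neg_sq_div_two]
      norm_num

theorem abs_mul_quadratic_mul_exp_eq (a b c x : ℝ) :
    |x| * (a + b * x + c * x ^ 2) * exp (-x ^ 2 / 2) =
      a * (|x| * x ^ 0 * exp (-x ^ 2 / 2)) + b * (|x| * x ^ 1 * exp (-x ^ 2 / 2)) +
        c * (|x| * x ^ 2 * exp (-x ^ 2 / 2)) := by
  ring

theorem integrable_abs_mul_quadratic_mul_exp_neg_sq_div_two (a b c : ℝ) :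
    Integrable fun x : ℝ => |x| * (a + b * x + c * x ^ 2) * exp (-x ^ 2 / 2) := by
  simp_rw [abs_mul_quadratic_mul_exp_eq]
  exact (((integrable_abs_mul_pow_mul_exp_neg_sq_div_two 0).const_mul a).add
    ((integrable_abs_mul_pow_mul_exp_neg_sq_div_two 1).const_mul b)).add
      ((integrable_abs_mul_pow_mul_exp_neg_sq_div_two 2).const_mul c)

theorem integral_abs_mul_quadratic_mul_exp_neg_sq_div_two (a b c : ℝ) :
    ∫ x : ℝ, |x| * (a + b * x + c * x ^ 2) * exp (-x ^ 2 / 2) = 2 * a + 4 * c := by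
  have hodd : ∫ x : ℝ, |x| * x ^ 1 * exp (-x ^ 2 / 2) = 0 :=
    integral_eq_zero_of_odd_s10 (fun x => by simp only [abs_neg, neg_sq]; ring) volume
  have hI (d : ℝ) (n : ℕ) := (integrable_abs_mul_pow_mul_exp_neg_sq_div_two n).const_mul d
  simp_rw [abs_mul_quadratic_mul_exp_eq]
  rw [integral_add, integral_add, integral_const_mul, integral_const_mul, integral_const_mul,
    hodd, integral_abs_mul_sq_mul_exp_neg_sq_div_two]
  · simp only [pow_zero, mul_one, integral_abs_mul_exp_neg_sq_div_two]
    ring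
  exacts [hI a 0, hI b 1, (hI a 0).add (hI b 1), hI c 2]

theorem integral_prod_quadratic_mul_exp_neg_sq_div_two {A B C : ℝ → ℝ} (hA : Integrable A)
    (hB : Integrable B) (hC : Integrable C) :
    ∫ p : ℝ × ℝ, (A p.2 + B p.2 * p.1 + C p.2 * p.1 ^ 2) * exp (-p.1 ^ 2 / 2) =
      √(2 * π) * ∫ v, (A v + C v) := by
  have hodd : ∫ u : ℝ, u ^ 1 * exp (-u ^ 2 / 2) = 0 :=
    integral_eq_zero_of_odd_s10 (fun u => by simp only [neg_sq]; ring) volume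
  have hI := integrable_pow_mul_exp_neg_sq_div_two
  have hsplit :
      (fun p : ℝ × ℝ => (A p.2 + B p.2 * p.1 + C p.2 * p.1 ^ 2) * exp (-p.1 ^ 2 / 2)) =
        fun p => p.1 ^ 0 * exp (-p.1 ^ 2 / 2) * A p.2 + p.1 ^ 1 * exp (-p.1 ^ 2 / 2) * B p.2 +
          p.1 ^ 2 * exp (-p.1 ^ 2 / 2) * C p.2 := by
    funext p; ring
  rw [hsplit, Measure.volume_eq_prod, integral_add, integral_add,
    integral_prod_mul (fun u => u ^ 0 * exp (-u ^ 2 / 2)) A,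
    integral_prod_mul (fun u => u ^ 1 * exp (-u ^ 2 / 2)) B,
    integral_prod_mul (fun u => u ^ 2 * exp (-u ^ 2 / 2)) C, integral_add hA hC, hodd,
    integral_sq_mul_exp_neg_sq_div_two]
  · simp only [pow_zero, one_mul, integral_exp_neg_sq_div_two]
    ring
  exacts [(hI 0).mul_prod hA, (hI 1).mul_prod hB,
    ((hI 0).mul_prod hA).add ((hI 1).mul_prod hB), (hI 2).mul_prod hC]

theorem abs_mul_log_abs_mul_exp (v t : ℝ) :
    |v| * log |v * exp t| = |v| * log |v| + |v| * t := by
  rcases eq_or_ne v 0 with rfl | hv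
  · simp
  rw [abs_mul, abs_of_pos (exp_pos t), log_mul (abs_ne_zero.2 hv) (exp_ne_zero t), log_exp,
    mul_add]

theorem sqrt_two_div_pi : √(2 / π) = 2 / √(2 * π) := by
  rw [show 2 / π = 2 ^ 2 / (2 * π) by field_simp, sqrt_div' _ (by positivity),
    sqrt_sq zero_le_two]

/-- In the quadratic exponential model, with
`m₁ = (2π)^{−1/2} ∫ |u| log|u| exp(−u²/2) du`,
`(2π)⁻¹ ∬ |v|·log|v·f(u,v)|·exp(−(u²+v²)/2) du dv = m₁ + (β₀ + β₁₁/2 + β₂₂)√(2/π)`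
(the moment identity `q₀·E'[|Ż_t| log|Ż_t|] = m₁ + (β₀ + β₁₁/2 + β₂₂)√(2/π)`). -/
theorem stmt10 (β₀ β₁ β₂ β₁₁ β₁₂ β₂₂ : ℝ)
    (f : ℝ → ℝ → ℝ)
    (hf : ∀ y ydot : ℝ, f y ydot =
      Real.exp (β₀ + β₁ * y + β₂ * ydot + β₁₁ / 2 * y ^ 2 + β₁₂ * y * ydot + β₂₂ / 2 * ydot ^ 2))
    (m₁ : ℝ)
    (hm₁ : m₁ = (Real.sqrt (2 * π))⁻¹ * ∫ u : ℝ, |u| * Real.log |u| * Real.exp (-u ^ 2 / 2)) :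
    (2 * π)⁻¹ * ∫ p : ℝ × ℝ,
        |p.2| * Real.log |p.2 * f p.1 p.2| * Real.exp (-(p.1 ^ 2 + p.2 ^ 2) / 2)
      = m₁ + (β₀ + β₁₁ / 2 + β₂₂) * Real.sqrt (2 / π) := by
  have hlog := integrable_abs_mul_log_abs_mul_exp_neg_sq_div_two
  have hquad := integrable_abs_mul_quadratic_mul_exp_neg_sq_div_two
  have hA : Integrable fun v : ℝ => |v| * log |v| * exp (-v ^ 2 / 2) +
      |v| * (β₀ + β₂ * v + β₂₂ / 2 * v ^ 2) * exp (-v ^ 2 / 2) :=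
    hlog.add (hquad _ _ _)
  -- The zero coefficients put the `u`- and `u²`-coefficients in the shape of `hquad`.
  have hsplit (u v : ℝ) : |v| * log |v * f u v| * exp (-(u ^ 2 + v ^ 2) / 2) =
      ((|v| * log |v| * exp (-v ^ 2 / 2) +
          |v| * (β₀ + β₂ * v + β₂₂ / 2 * v ^ 2) * exp (-v ^ 2 / 2))
        + |v| * (β₁ + β₁₂ * v + 0 * v ^ 2) * exp (-v ^ 2 / 2) * u
        + |v| * (β₁₁ / 2 + 0 * v + 0 * v ^ 2) * exp (-v ^ 2 / 2) * u ^ 2) *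
        exp (-u ^ 2 / 2) := by
    rw [hf, abs_mul_log_abs_mul_exp, show -(u ^ 2 + v ^ 2) / 2 = -u ^ 2 / 2 + -v ^ 2 / 2 by ring,
      exp_add]
    ring
  simp_rw [hsplit]
  rw [integral_prod_quadratic_mul_exp_neg_sq_div_two hA (hquad _ _ _) (hquad _ _ _),
    integral_add hA (hquad _ _ _), integral_add hlog (hquad _ _ _),
    integral_abs_mul_quadratic_mul_exp_neg_sq_div_two,
    integral_abs_mul_quadratic_mul_exp_neg_sq_div_two, hm₁, sqrt_two_div_pi]
  field_simp
  rw [sq_sqrt (by positivity)]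
  ring
end

section
/- Let f₁, f₂ : ℝ → (0,∞) be continuously differentiable, assume F(v) := v·f₂(v) is a strictly increasing bijection of ℝ with F'(v) > 0 for all v, let k = F⁻¹, assume the normalization ∫_ℝ exp(−u²/2)/f₂(u) du = 1, and set q₀ := (2π)⁻¹ ∫_ℝ exp(−u²/2)/f₁(u) du, assumed finite. Define p(z,ż) = (2πq₀)⁻¹ · k'(ż/f₁(z)) / (f₁(z)² f₂(k(ż/f₁(z)))) · exp(−(z² + k(ż/f₁(z))²)/2). Then for every z ∈ ℝ, ∫_ℝ p(z,ż) dż = (2πq₀)⁻¹ · exp(−z²/2)/f₁(z); that is, the stationary marginal density of Z depends only on f₁ and equals p_Z(z) = (2πq₀)⁻¹ exp(−z²/2)/f₁(z). -/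
open MeasureTheory Real

/-! Write `a = f₁ z`. Pulling out the factor `e^{−z²/2}/a²`, the integrand is
`t ↦ k'(t) e^{−k(t)²/2}/f₂(k(t))` evaluated at `t = ż/a`. The substitution `ż = a t`
produces a factor `a`, and the substitution `u = k(t)` (legitimate since `k` is a
differentiable increasing bijection) turns the remaining integral into
`∫ e^{−u²/2}/f₂(u) du = 1`. -/

theorem hasDerivAt_inverse_of_deriv_pos {F k : ℝ → ℝ} (hF' : ∀ v, 0 < deriv F v)
    (hk₁ : Function.LeftInverse k F) (hk₂ : Function.RightInverse k F) (t : ℝ) :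
    HasDerivAt k (deriv F (k t))⁻¹ t := by
  have hk_mono : StrictMono k := fun a b hab =>
    (strictMono_of_deriv_pos hF').lt_iff_lt.mp (by rwa [hk₂ a, hk₂ b])
  have hk_cont : Continuous k := hk_mono.monotone.continuous_of_surjective hk₁.surjective
  exact HasDerivAt.of_local_left_inverse hk_cont.continuousAt
    (differentiableAt_of_deriv_ne_zero (hF' (k t)).ne').hasDerivAt (hF' (k t)).ne'
    (Filter.Eventually.of_forall hk₂)

theorem integral_deriv_smul_comp_of_bijective {E : Type*} [NormedAddCommGroup E]
    [NormedSpace ℝ E] {k k' : ℝ → ℝ} (hk : ∀ t, HasDerivAt k (k' t) t)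
    (hk' : ∀ t, 0 ≤ k' t) (hk_bij : Function.Bijective k) (g : ℝ → E) :
    ∫ t, k' t • g (k t) = ∫ u, g u := by
  have h := integral_image_eq_integral_abs_deriv_smul MeasurableSet.univ
    (fun t _ => (hk t).hasDerivWithinAt) hk_bij.injective.injOn g
  rw [Set.image_univ, hk_bij.surjective.range_eq, Measure.restrict_univ] at h
  simp only [h, abs_of_nonneg (hk' _)]

theorem stmt15_general (f₁ f₂ : ℝ → ℝ)
    (hf₁_pos : ∀ v, 0 < f₁ v)
    (F : ℝ → ℝ)
    (hF' : ∀ v, 0 < deriv F v)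
    (k : ℝ → ℝ) (hk₁ : Function.LeftInverse k F) (hk₂ : Function.RightInverse k F)
    (hf₂_norm : ∫ u : ℝ, Real.exp (-u ^ 2 / 2) / f₂ u = 1)
    (q₀ : ℝ)
    (p : ℝ → ℝ → ℝ)
    (hp : ∀ z zdot : ℝ, p z zdot =
      (2 * π * q₀)⁻¹ * deriv k (zdot / f₁ z) / ((f₁ z) ^ 2 * f₂ (k (zdot / f₁ z))) *
        Real.exp (-(z ^ 2 + (k (zdot / f₁ z)) ^ 2) / 2)) :
    ∀ z : ℝ, ∫ zdot : ℝ, p z zdot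
      = (2 * π * q₀)⁻¹ * Real.exp (-z ^ 2 / 2) / f₁ z := by
  intro z
  set a := f₁ z
  have ha : 0 < a := hf₁_pos z
  set φ : ℝ → ℝ := fun t => deriv k t * (Real.exp (-k t ^ 2 / 2) / f₂ (k t))
  have hk := hasDerivAt_inverse_of_deriv_pos hF' hk₁ hk₂
  have hφ : ∫ t, φ t = 1 := by
    rw [← hf₂_norm]
    exact integral_deriv_smul_comp_of_bijective (fun t => (hk t).differentiableAt.hasDerivAt)
      (fun t => (hk t).deriv ▸ (inv_pos.mpr (hF' (k t))).le)
      ⟨hk₂.injective, hk₁.surjective⟩ (fun u => Real.exp (-u ^ 2 / 2) / f₂ u)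
  have hp_z : ∀ zdot,
      p z zdot = (2 * π * q₀)⁻¹ * Real.exp (-z ^ 2 / 2) / a ^ 2 * φ (zdot / a) := by
    intro zdot
    rw [hp, show -(z ^ 2 + k (zdot / a) ^ 2) / 2 = -z ^ 2 / 2 + -k (zdot / a) ^ 2 / 2 by ring,
      Real.exp_add]
    ring
  simp only [hp_z, integral_const_mul, Measure.integral_comp_div, hφ, abs_of_pos ha,
    smul_eq_mul]
  field_simp

/-- In the model with no interaction, under the normalization
`∫ e^{−u²/2}/f₂(u) du = 1` and with `q₀ = (2π)⁻¹ ∫ e^{−u²/2}/f₁(u) du` finite,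
the stationary marginal density of `Z` depends only on `f₁`:
`∫ p(z,ż) dż = (2πq₀)⁻¹ e^{−z²/2}/f₁(z)` for every `z`. -/
theorem stmt15 (f₁ f₂ : ℝ → ℝ)
    (hf₁_pos : ∀ v, 0 < f₁ v) (hf₂_pos : ∀ v, 0 < f₂ v)
    (hf₁ : ContDiff ℝ 1 f₁) (hf₂ : ContDiff ℝ 1 f₂)
    (F : ℝ → ℝ) (hF : ∀ v, F v = v * f₂ v)
    (hF_mono : StrictMono F) (hF_bij : Function.Bijective F)
    (hF' : ∀ v, 0 < deriv F v)
    (k : ℝ → ℝ) (hk₁ : Function.LeftInverse k F) (hk₂ : Function.RightInverse k F)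
    (hf₂_norm : ∫ u : ℝ, Real.exp (-u ^ 2 / 2) / f₂ u = 1)
    (h_int : Integrable (fun u : ℝ => Real.exp (-u ^ 2 / 2) / f₁ u))
    (q₀ : ℝ) (hq₀ : q₀ = (2 * π)⁻¹ * ∫ u : ℝ, Real.exp (-u ^ 2 / 2) / f₁ u)
    (p : ℝ → ℝ → ℝ)
    (hp : ∀ z zdot : ℝ, p z zdot =
      (2 * π * q₀)⁻¹ * deriv k (zdot / f₁ z) / ((f₁ z) ^ 2 * f₂ (k (zdot / f₁ z))) *
        Real.exp (-(z ^ 2 + (k (zdot / f₁ z)) ^ 2) / 2)) :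
    ∀ z : ℝ, ∫ zdot : ℝ, p z zdot
      = (2 * π * q₀)⁻¹ * Real.exp (-z ^ 2 / 2) / f₁ z :=
  stmt15_general f₁ f₂ hf₁_pos F hF' k hk₁ hk₂ hf₂_norm q₀ p hp
end
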